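/- arXiv:2109.11198 — 2 statements merged into one kernel-verified Lean document; each statement's English description precedes it below -/
import Mathlib

section
/- Let G be a finite group, π a set of primes with O_π(G) ≠ 1, and let f be any real-valued function on the set of subgroups of G. Then the alternating sum over all chains C of π-subgroups of G of (-1)^{|C|} · |G_C| · f(G_C) equals 0. -/
/-- `n` is a π-number: all prime divisors lie in π. -/
def IsPiNumber (π : Set ℕ) (n : ℕ) : Prop := ∀ p : ℕ, p.Prime → p ∣ n → p ∈ π

/-- A π-subgroup: a subgroup whose order is a π-number. -/
def IsPiSubgroup (π : Set ℕ) {G : Type*} [Group G] (P : Subgroup G) : Prop :=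
  IsPiNumber π (Nat.card P)

/-- A chain 1 = P₀ < P₁ < … < Pₙ of π-subgroups of `G`, encoded by its (totally
ordered, hence strictly increasing) finite set of members, which contains ⊥. -/
structure PiChain (π : Set ℕ) (G : Type*) [Group G] where
  carrier : Finset (Subgroup G)
  bot_mem : ⊥ ∈ carrier
  isChain : IsChain (· ≤ ·) (carrier : Set (Subgroup G))
  pi : ∀ P ∈ carrier, IsPiSubgroup π P

/-- The length |C| = n of a chain 1 = P₀ < … < Pₙ. -/
def PiChain.len {π : Set ℕ} {G : Type*} [Group G] (C : PiChain π G) : ℕ :=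
  C.carrier.card - 1

/-- The stabilizer G_C = ⋂ᵢ N_G(Pᵢ) of a chain. -/
def PiChain.stab {π : Set ℕ} {G : Type*} [Group G] (C : PiChain π G) : Subgroup G :=
  ⨅ P ∈ C.carrier, Subgroup.normalizer P

instance {π : Set ℕ} {G : Type*} [Group G] [Finite G] : Finite (PiChain π G) := by
  have : Fintype G := Fintype.ofFinite G
  classical
  apply Finite.of_injective (fun C : PiChain π G => C.carrier)
  intro C D h
  cases C; cases D; simpa using h

/-- O_π(G): the largest normal π-subgroup of `G`. -/
def piCore (π : Set ℕ) (G : Type*) [Group G] : Subgroup G :=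
  ⨆ P ∈ {P : Subgroup G | P.Normal ∧ IsPiSubgroup π P}, P

/-!
Fix a nontrivial normal π-subgroup `N` of `G`. For a chain `C`, let `P` be its largest member not
containing `N` (there is one, as `1` is such a member) and toggle the member `NP`: remove it if
present, insert it otherwise. Since `N` is normal, `NP` is a π-subgroup comparable with every member
of `C`, and `N_G(P) ≤ N_G(NP)`, so the stabilizer is unchanged while the length changes by one. The
largest member not containing `N` is not affected by the toggle, so this is a fixed-point-free
involution on chains reversing the sign of every summand.
-/

open scoped Classical

theorem IsChain.supClosed {α : Type*} [SemilatticeSup α] {s : Set α}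
    (hs : IsChain (· ≤ ·) s) : SupClosed s := by
  intro a ha b hb
  rcases eq_or_ne a b with rfl | hab
  · simpa using ha
  rcases hs ha hb hab with h | h
  · rwa [sup_eq_right.mpr h]
  · rwa [sup_eq_left.mpr h]

theorem Finset.iInf_insert_of_le {α β : Type*} [CompleteLattice β] {f : α → β} {s : Finset α}
    {a b : α} (hb : b ∈ s) (hba : f b ≤ f a) : ⨅ x ∈ insert a s, f x = ⨅ x ∈ s, f x := by
  rw [Finset.iInf_insert]
  exact inf_eq_right.mpr ((iInf₂_le b hb).trans hba)

namespace Subgroup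

variable {G : Type*} [Group G]

theorem normalizer_le_normalizer_sup_of_normal {N : Subgroup G} [N.Normal] (H : Subgroup G) :
    normalizer (H : Set G) ≤ normalizer ((N ⊔ H : Subgroup G) : Set G) := by
  simpa [normalizer_eq_top] using normalizer_inf_normalizer_le_normalizer_sup N H

theorem card_sup_dvd_of_normal (N : Subgroup G) [N.Normal] (H : Subgroup G) :
    Nat.card ↥(N ⊔ H) ∣ Nat.card N * Nat.card H := by
  rw [← card_mul_index (N.subgroupOf (N ⊔ H)),
    Nat.card_congr (subgroupOfEquivOfLe le_sup_left).toEquiv]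
  refine Nat.mul_dvd_mul_left _ ?_
  change N.relIndex (N ⊔ H) ∣ _
  exact (relIndex_sup_left H N).symm ▸ relIndex_dvd_card N H

end Subgroup

theorem IsPiNumber.of_dvd {π : Set ℕ} {m n : ℕ} (hn : IsPiNumber π n) (hmn : m ∣ n) :
    IsPiNumber π m :=
  fun p hp hpm => hn p hp (hpm.trans hmn)

theorem IsPiNumber.mul {π : Set ℕ} {m n : ℕ} (hm : IsPiNumber π m) (hn : IsPiNumber π n) :
    IsPiNumber π (m * n) :=
  fun p hp hpmn => (hp.dvd_mul.mp hpmn).elim (hm p hp) (hn p hp)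

theorem IsPiSubgroup.sup_of_normal {π : Set ℕ} {G : Type*} [Group G] {N H : Subgroup G}
    [N.Normal] (hN : IsPiSubgroup π N) (hH : IsPiSubgroup π H) : IsPiSubgroup π (N ⊔ H) :=
  (hN.mul hH).of_dvd (Subgroup.card_sup_dvd_of_normal N H)

theorem piCore_eq_bot_iff {π : Set ℕ} {G : Type*} [Group G] :
    piCore π G = ⊥ ↔ ∀ N : Subgroup G, N.Normal → IsPiSubgroup π N → N = ⊥ := by
  simp [piCore]

namespace PiChain
open Subgroup

variable {π : Set ℕ} {G : Type*} [Group G]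

theorem carrier_injective : Function.Injective (carrier : PiChain π G → Finset (Subgroup G)) := by
  intro C D h
  cases C; cases D; simpa using h

noncomputable def toggle (C : PiChain π G) (Q : Subgroup G) (hQ : Q ≠ ⊥)
    (hQC : ∀ P ∈ C.carrier, P ≤ Q ∨ Q ≤ P) (hQπ : IsPiSubgroup π Q) : PiChain π G where
  carrier := if Q ∈ C.carrier then C.carrier.erase Q else insert Q C.carrier
  bot_mem := by
    split
    · exact Finset.mem_erase.mpr ⟨hQ.symm, C.bot_mem⟩
    · exact Finset.mem_insert_of_mem C.bot_mem
  isChain := by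
    split
    · exact C.isChain.mono (by simp)
    · rw [Finset.coe_insert]
      exact C.isChain.insert fun P hP _ => (hQC P hP).symm
  pi := by
    split
    · exact fun P hP => C.pi P (Finset.mem_of_mem_erase hP)
    · intro P hP
      rcases Finset.mem_insert.mp hP with rfl | hP
      exacts [hQπ, C.pi P hP]

section Toggle

variable (C : PiChain π G) {Q : Subgroup G} (hQ : Q ≠ ⊥)
  (hQC : ∀ P ∈ C.carrier, P ≤ Q ∨ Q ≤ P) (hQπ : IsPiSubgroup π Q)

theorem carrier_toggle : (C.toggle Q hQ hQC hQπ).carrier =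
    if Q ∈ C.carrier then C.carrier.erase Q else insert Q C.carrier := rfl

theorem mem_toggle_iff : Q ∈ (C.toggle Q hQ hQC hQπ).carrier ↔ Q ∉ C.carrier := by
  by_cases hQmem : Q ∈ C.carrier <;> simp [carrier_toggle, hQmem]

theorem toggle_ne : C.toggle Q hQ hQC hQπ ≠ C := fun h =>
  by simpa [h] using C.mem_toggle_iff hQ hQC hQπ

theorem neg_one_pow_len_toggle {R : Type*} [Ring R] :
    (-1 : R) ^ (C.toggle Q hQ hQC hQπ).len = -(-1) ^ C.len := by
  have hcard : 1 ≤ C.carrier.card := Finset.card_pos.mpr ⟨⊥, C.bot_mem⟩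
  rw [len, len, carrier_toggle]
  split_ifs with hQmem
  · have h2 : 2 ≤ C.carrier.card :=
      Finset.one_lt_card.mpr ⟨⊥, C.bot_mem, Q, hQmem, hQ.symm⟩
    rw [Finset.card_erase_of_mem hQmem,
      show C.carrier.card - 1 = C.carrier.card - 1 - 1 + 1 by omega, pow_succ]
    simp
  · rw [Finset.card_insert_of_notMem hQmem,
      show C.carrier.card + 1 - 1 = C.carrier.card - 1 + 1 by omega, pow_succ]
    simp

theorem stab_toggle {P : Subgroup G} (hP : P ∈ C.carrier) (hPQ : P ≠ Q)
    (hPQN : normalizer (P : Set G) ≤ normalizer (Q : Set G)) :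
    (C.toggle Q hQ hQC hQπ).stab = C.stab := by
  rw [stab, stab, carrier_toggle]
  split_ifs with hQmem
  · conv_rhs => rw [← Finset.insert_erase hQmem]
    exact (Finset.iInf_insert_of_le (Finset.mem_erase.mpr ⟨hPQ, hP⟩) hPQN).symm
  · exact Finset.iInf_insert_of_le hP hPQN

end Toggle

section Pivot

variable (C : PiChain π G) (N : Subgroup G)

noncomputable def notAbove : Finset (Subgroup G) := C.carrier.filter (¬ N ≤ ·)

noncomputable def pivot : Subgroup G := N ⊔ (C.notAbove N).sup id

variable {N}

theorem sup_notAbove_mem (hN : N ≠ ⊥) : (C.notAbove N).sup id ∈ C.notAbove N := by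
  have hchain : IsChain (· ≤ ·) (C.notAbove N : Set (Subgroup G)) :=
    C.isChain.mono (Finset.coe_subset.mpr (Finset.filter_subset _ _))
  have hbot : ⊥ ∈ C.notAbove N := by simp [notAbove, C.bot_mem, hN]
  exact hchain.supClosed.finsetSup_mem ⟨⊥, hbot⟩ fun P hP => hP

theorem sup_notAbove_mem_carrier (hN : N ≠ ⊥) : (C.notAbove N).sup id ∈ C.carrier :=
  (Finset.mem_filter.mp (C.sup_notAbove_mem hN)).1

theorem not_le_sup_notAbove (hN : N ≠ ⊥) : ¬ N ≤ (C.notAbove N).sup id :=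
  (Finset.mem_filter.mp (C.sup_notAbove_mem hN)).2

theorem le_pivot : N ≤ C.pivot N := le_sup_left

theorem pivot_ne_bot (hN : N ≠ ⊥) : C.pivot N ≠ ⊥ :=
  fun h => hN (le_bot_iff.mp (h ▸ C.le_pivot))

theorem pivot_comparable (hN : N ≠ ⊥) (P : Subgroup G) (hP : P ∈ C.carrier) :
    P ≤ C.pivot N ∨ C.pivot N ≤ P := by
  by_cases hNP : N ≤ P
  · rcases C.isChain.total hP (C.sup_notAbove_mem_carrier hN) with hle | hle
    exacts [Or.inl (hle.trans le_sup_right), Or.inr (sup_le hNP hle)]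
  · exact Or.inl ((Finset.le_sup (f := id) (Finset.mem_filter.mpr ⟨hP, hNP⟩)).trans le_sup_right)

theorem isPiSubgroup_pivot [N.Normal] (hNπ : IsPiSubgroup π N) (hN : N ≠ ⊥) :
    IsPiSubgroup π (C.pivot N) :=
  hNπ.sup_of_normal (C.pi _ (C.sup_notAbove_mem_carrier hN))

theorem notAbove_toggle {Q : Subgroup G} (hNQ : N ≤ Q) (hQ : Q ≠ ⊥)
    (hQC : ∀ P ∈ C.carrier, P ≤ Q ∨ Q ≤ P) (hQπ : IsPiSubgroup π Q) :
    (C.toggle Q hQ hQC hQπ).notAbove N = C.notAbove N := by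
  have hQN : Q ∉ C.notAbove N := fun h => (Finset.mem_filter.mp h).2 hNQ
  rw [notAbove, carrier_toggle]
  split_ifs
  · rw [Finset.filter_erase, ← notAbove, Finset.erase_eq_of_notMem hQN]
  · rw [Finset.filter_insert, if_neg (not_not_intro hNQ), ← notAbove]

end Pivot

section Involution

variable {N : Subgroup G} [N.Normal] (hNπ : IsPiSubgroup π N) (hN : N ≠ ⊥)

noncomputable def togglePivot (C : PiChain π G) : PiChain π G :=
  C.toggle (C.pivot N) (C.pivot_ne_bot hN) (C.pivot_comparable hN) (C.isPiSubgroup_pivot hNπ hN)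

theorem carrier_togglePivot (C : PiChain π G) : (C.togglePivot hNπ hN).carrier =
    if C.pivot N ∈ C.carrier then C.carrier.erase (C.pivot N) else insert (C.pivot N) C.carrier :=
  rfl

theorem pivot_togglePivot (C : PiChain π G) : (C.togglePivot hNπ hN).pivot N = C.pivot N := by
  rw [pivot, pivot, togglePivot, notAbove_toggle _ C.le_pivot]

theorem togglePivot_togglePivot (C : PiChain π G) :
    (C.togglePivot hNπ hN).togglePivot hNπ hN = C := by
  apply carrier_injective
  rw [carrier_togglePivot, pivot_togglePivot, carrier_togglePivot]
  by_cases hmem : C.pivot N ∈ C.carrier <;> simp [hmem]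

theorem stab_togglePivot (C : PiChain π G) : (C.togglePivot hNπ hN).stab = C.stab :=
  C.stab_toggle _ _ _ (C.sup_notAbove_mem_carrier hN)
    (fun h => C.not_le_sup_notAbove hN (h ▸ C.le_pivot))
    (normalizer_le_normalizer_sup_of_normal _)

end Involution

end PiChain

theorem alternating_sum_vanishes_general (π : Set ℕ)
    (G : Type*) [Group G] [Finite G] (h : piCore π G ≠ ⊥)
    (f : Subgroup G → ℝ) :
    ∑ᶠ C : PiChain π G,
      ((-1 : ℝ) ^ C.len * (Nat.card ↥C.stab : ℝ) * f C.stab) = 0 := by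
  obtain ⟨N, hNn, hNπ, hN⟩ : ∃ N : Subgroup G, N.Normal ∧ IsPiSubgroup π N ∧ N ≠ ⊥ := by
    simpa [piCore_eq_bot_iff] using h
  have := Fintype.ofFinite (PiChain π G)
  rw [finsum_eq_sum_of_fintype]
  refine Finset.sum_ninvolution (PiChain.togglePivot hNπ hN) (fun C => ?_)
    (fun C _ => C.toggle_ne _ _ _) (fun _ => Finset.mem_univ _)
    (PiChain.togglePivot_togglePivot hNπ hN)
  rw [PiChain.stab_togglePivot, PiChain.togglePivot, PiChain.neg_one_pow_len_toggle]
  ring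

/-- Lemma 2.1: if O_π(G) ≠ 1 then Σ_C (-1)^{|C|} |G_C| f(G_C) = 0 for every
real-valued function f on the subgroups of G. -/
theorem alternating_sum_vanishes (π : Set ℕ) (hπ : ∀ p ∈ π, p.Prime)
    (G : Type*) [Group G] [Finite G] (h : piCore π G ≠ ⊥)
    (f : Subgroup G → ℝ) :
    ∑ᶠ C : PiChain π G,
      ((-1 : ℝ) ^ C.len * (Nat.card ↥C.stab : ℝ) * f C.stab) = 0 :=
  alternating_sum_vanishes_general π G h f
end

section
/- Let G be a finite π-separable group with O_π(G) = 1. Then C_G(O_{π'}(G)) ≤ O_{π'}(G). In particular, if additionally O_{π'}(G) is central in G, then G = O_{π'}(G) is a π'-group. -/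
/-- `G` is π-separable: it has a (sub)normal series each of whose factors is a
π-group or a π'-group. -/
def IsPiSeparable (π : Set ℕ) (G : Type*) [Group G] : Prop :=
  ∃ (n : ℕ) (H : Fin (n + 1) → Subgroup G),
    H 0 = ⊥ ∧ H (Fin.last n) = ⊤ ∧
    (∀ i : Fin n, H i.castSucc ≤ H i.succ) ∧
    ∀ i : Fin n, ((H i.castSucc).subgroupOf (H i.succ)).Normal ∧
      (IsPiNumber π (Nat.card (↥(H i.succ) ⧸ (H i.castSucc).subgroupOf (H i.succ))) ∨
       IsPiNumber πᶜ (Nat.card (↥(H i.succ) ⧸ (H i.castSucc).subgroupOf (H i.succ))))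

/-!
Let `F = O_{π'}(G)`, `C = C_G(F)` and `D = C ∩ F`, a π'-group. If `C ≰ F`, the quotient `C/D` is a
nontrivial π-separable group, so some `O_σ(C/D)` with `σ ∈ {π, π'}` is nontrivial; being
characteristic, its preimage `K` is normal in `G`, with `D < K ≤ C`. If `σ = π'`, then `K` is a
normal π'-subgroup, so `K ≤ C ∩ F = D`. If `σ = π`, then `D` is a central π'-subgroup of `K` of
π-index, so by Schur–Zassenhaus it has a normal complement in `K`; that complement is a π-subgroup
of `O_π(K) ≤ O_π(G) = 1`, so again `K = D`.
-/

open Subgroup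

variable {π : Set ℕ}

namespace IsPiNumber

lemma one : IsPiNumber π 1 :=
  fun _ hp hdvd => absurd (Nat.dvd_one.mp hdvd) hp.ne_one

lemma of_dvd_s12 {m n : ℕ} (hn : IsPiNumber π n) (hmn : m ∣ n) : IsPiNumber π m :=
  fun p hp hpm => hn p hp (hpm.trans hmn)

lemma mul_s12 {m n : ℕ} (hm : IsPiNumber π m) (hn : IsPiNumber π n) : IsPiNumber π (m * n) :=
  fun p hp hpmn => (hp.dvd_mul.mp hpmn).elim (hm p hp) (hn p hp)

lemma coprime {m n : ℕ} (hm : IsPiNumber π m) (hn : IsPiNumber πᶜ n) : m.Coprime n :=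
  Nat.coprime_of_dvd fun p hp hpm hpn => hn p hp hpn (hm p hp hpm)

end IsPiNumber

section PiSubgroup

variable {G G' : Type*} [Group G] [Group G'] {H K : Subgroup G}

lemma isPiSubgroup_bot : IsPiSubgroup π (⊥ : Subgroup G) := by
  simpa [IsPiSubgroup] using IsPiNumber.one

lemma IsPiSubgroup.of_le (hK : IsPiSubgroup π K) (hHK : H ≤ K) : IsPiSubgroup π H :=
  IsPiNumber.of_dvd_s12 hK (card_dvd_of_le hHK)

lemma IsPiSubgroup.map (hH : IsPiSubgroup π H) (f : G →* G') : IsPiSubgroup π (H.map f) :=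
  IsPiNumber.of_dvd_s12 hH (card_map_dvd H f)

lemma IsPiSubgroup.sup [K.Normal] (hH : IsPiSubgroup π H) (hK : IsPiSubgroup π K) :
    IsPiSubgroup π (H ⊔ K) := by
  have hcard : Nat.card K * K.relIndex H = Nat.card ↥(H ⊔ K) := by
    rw [← relIndex_sup_right, ← relIndex_bot_left, ← relIndex_bot_left,
      relIndex_mul_relIndex _ _ _ bot_le le_sup_right]
  exact IsPiNumber.of_dvd_s12 (hK.mul_s12 hH) (hcard ▸ mul_dvd_mul_left _ (relIndex_dvd_card K H))

lemma IsPiSubgroup.of_relIndex (hH : IsPiSubgroup π H) (hHK : H ≤ K)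
    (hrel : IsPiNumber π (H.relIndex K)) : IsPiSubgroup π K := by
  have hcard : Nat.card H * H.relIndex K = Nat.card K := by
    rw [← relIndex_bot_left, ← relIndex_bot_left, relIndex_mul_relIndex _ _ _ bot_le hHK]
  show IsPiNumber π (Nat.card K)
  exact hcard ▸ hH.mul_s12 hrel

end PiSubgroup

section PiCore

variable {G : Type*} [Group G]

lemma le_piCore {P : Subgroup G} (hPn : P.Normal) (hP : IsPiSubgroup π P) : P ≤ piCore π G :=
  le_biSup (fun P => P) (show P ∈ {P : Subgroup G | P.Normal ∧ IsPiSubgroup π P} from ⟨hPn, hP⟩)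

lemma piCore_eq_top (hG : IsPiNumber π (Nat.card G)) : piCore π G = ⊤ :=
  top_le_iff.mp <| le_piCore inferInstance <| by
    simpa [IsPiSubgroup, card_top] using hG

variable [Finite G]

lemma piCore_mem : piCore π G ∈ {P : Subgroup G | P.Normal ∧ IsPiSubgroup π P} := by
  have hsup : SupClosed {P : Subgroup G | P.Normal ∧ IsPiSubgroup π P} :=
    fun _ ⟨_, hH⟩ _ ⟨_, hK⟩ => ⟨sup_normal _ _, hH.sup hK⟩
  exact hsup.biSup_mem (Set.toFinite _) ⟨inferInstance, isPiSubgroup_bot⟩ fun _ hP => hP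

instance piCore_normal : (piCore π G).Normal :=
  piCore_mem.1

lemma isPiSubgroup_piCore : IsPiSubgroup π (piCore π G) :=
  piCore_mem.2

instance piCore_characteristic : (piCore π G).Characteristic :=
  characteristic_iff_map_le.mpr fun φ =>
    le_piCore (piCore_normal.map _ φ.surjective) (isPiSubgroup_piCore.map _)

lemma piCore_eq_bot_of_normal (N : Subgroup G) [N.Normal] (h : piCore π G = ⊥) :
    piCore π N = ⊥ := by
  have hle : (piCore π N).map N.subtype ≤ piCore π G :=
    le_piCore inferInstance (isPiSubgroup_piCore.map _)
  rwa [h, le_bot_iff, map_eq_bot_iff_of_injective _ N.subtype_injective] at hle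

end PiCore

section Series

variable {G G' : Type*} [Group G] [Group G']

def IsPiStep (π : Set ℕ) (A B : Subgroup G) : Prop :=
  A ≤ B ∧ B ≤ normalizer (A : Set G) ∧ (IsPiNumber π (A.relIndex B) ∨ IsPiNumber πᶜ (A.relIndex B))

lemma isPiSeparable_iff : IsPiSeparable π G ↔ ∃ (n : ℕ) (H : Fin (n + 1) → Subgroup G),
    H 0 = ⊥ ∧ H (Fin.last n) = ⊤ ∧ ∀ i : Fin n, IsPiStep π (H i.castSucc) (H i.succ) := by
  refine exists₂_congr fun n H => and_congr_right' <| and_congr_right' ?_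
  refine ⟨fun ⟨hle, hstep⟩ i => ⟨hle i, ?_, (hstep i).2⟩,
    fun hstep => ⟨fun i => (hstep i).1, fun i => ⟨?_, (hstep i).2.2⟩⟩⟩
  · exact (normal_subgroupOf_iff_le_normalizer (hle i)).mp (hstep i).1
  · exact (normal_subgroupOf_iff_le_normalizer (hstep i).1).mpr (hstep i).2.1

namespace IsPiStep

variable {A B : Subgroup G}

lemma comap (h : IsPiStep π A B) (f : G' →* G) : IsPiStep π (A.comap f) (B.comap f) := by
  obtain ⟨hAB, hBA, hrel⟩ := h
  refine ⟨comap_mono hAB, (comap_mono hBA).trans (le_normalizer_comap f), ?_⟩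
  have hdvd : (A.comap f).relIndex (B.comap f) ∣ A.relIndex B := by
    have := (normal_subgroupOf_iff_le_normalizer hAB).mpr hBA
    rw [relIndex_comap, map_comap_eq, ← relIndex_subgroupOf inf_le_right]
    exact relIndex_dvd_index_of_normal _ _
  exact hrel.imp (·.of_dvd hdvd) (·.of_dvd hdvd)

lemma map (h : IsPiStep π A B) (f : G →* G') : IsPiStep π (A.map f) (B.map f) := by
  obtain ⟨hAB, hBA, hrel⟩ := h
  refine ⟨map_mono hAB, (map_mono hBA).trans (le_normalizer_map f), ?_⟩
  have hdvd : (A.map f).relIndex (B.map f) ∣ A.relIndex B := by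
    rw [← relIndex_comap, comap_map_eq]
    exact relIndex_dvd_of_le_left _ le_sup_left
  exact hrel.imp (·.of_dvd hdvd) (·.of_dvd hdvd)

end IsPiStep

namespace IsPiSeparable

lemma subgroup (h : IsPiSeparable π G) (K : Subgroup G) : IsPiSeparable π K := by
  obtain ⟨n, H, h0, htop, hstep⟩ := isPiSeparable_iff.mp h
  refine isPiSeparable_iff.mpr ⟨n, fun i => (H i).subgroupOf K, ?_, ?_, fun i => (hstep i).comap _⟩
  · simp [h0]
  · simp [htop]

lemma of_surjective (h : IsPiSeparable π G) (f : G →* G') (hf : Function.Surjective f) :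
    IsPiSeparable π G' := by
  obtain ⟨n, H, h0, htop, hstep⟩ := isPiSeparable_iff.mp h
  refine isPiSeparable_iff.mpr ⟨n, fun i => (H i).map f, ?_, ?_, fun i => (hstep i).map f⟩
  · simp [h0]
  · simp [htop, map_top_of_surjective f hf]

end IsPiSeparable

end Series

theorem IsPiSeparable.piCore_ne_bot {G : Type*} [Group G] [Finite G] [Nontrivial G]
    (h : IsPiSeparable π G) : piCore π G ≠ ⊥ ∨ piCore πᶜ G ≠ ⊥ := by
  rw [isPiSeparable_iff] at h
  obtain ⟨n, H, h0, htop, hstep⟩ := h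
  induction n generalizing G with
  | zero => exact absurd (h0.symm.trans htop) bot_ne_top
  | succ n ih =>
    set N := H (Fin.last n).castSucc
    obtain ⟨-, hN, hrel⟩ : IsPiStep π N ⊤ := by
      simpa only [Fin.succ_last, htop] using hstep (Fin.last n)
    have : N.Normal := normalizer_eq_top_iff.mp (top_le_iff.mp hN)
    by_cases hNbot : N = ⊥
    · rw [relIndex_top_right, hNbot, index_bot] at hrel
      exact hrel.imp (fun hG => by simp [piCore_eq_top hG]) (fun hG => by simp [piCore_eq_top hG])
    · have : Nontrivial N := (nontrivial_iff_ne_bot N).mpr hNbot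
      have hN := ih (fun i => (H i.castSucc).subgroupOf N) (by simp [h0]) (subgroupOf_self N)
        fun i => by
          rw [← Fin.succ_castSucc]; exact (hstep i.castSucc).comap N.subtype
      exact hN.imp (mt (piCore_eq_bot_of_normal N)) (mt (piCore_eq_bot_of_normal N))

section HallHigman

variable {G : Type*} [Group G]

theorem exists_normal_isComplement'_of_le_center {N : Subgroup G} (hN : N ≤ center G)
    (hcop : (Nat.card N).Coprime N.index) : ∃ P : Subgroup G, P.Normal ∧ N.IsComplement' P := by
  have hcentral : ∀ n ∈ N, ∀ g : G, g * n = n * g := fun n hn => mem_center_iff.mp (hN hn)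
  have : N.Normal := ⟨fun n hn g => by rwa [hcentral n hn, mul_inv_cancel_right]⟩
  obtain ⟨P, hNP⟩ := exists_right_complement'_of_coprime hcop
  refine ⟨P, ⟨fun p hp g => ?_⟩, hNP⟩
  obtain ⟨⟨n, q⟩, rfl, -⟩ := hNP.existsUnique g
  have hconj : (n : G) * q * p * ((n : G) * q)⁻¹ = q * p * (q : G)⁻¹ := by
    rw [show (n : G) * q * p * ((n : G) * q)⁻¹ = n * (q * p * (q : G)⁻¹) * (n : G)⁻¹ by group,
      ← hcentral n n.2, mul_inv_cancel_right]
  exact hconj ▸ mul_mem (mul_mem q.2 hp) (inv_mem q.2)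

variable [Finite G]

theorem le_of_le_centralizer_of_isPiNumber_relIndex (h : piCore π G = ⊥) {D K : Subgroup G}
    [K.Normal] (hDK : D ≤ K) (hKD : K ≤ centralizer D) (hD : IsPiSubgroup πᶜ D)
    (hrel : IsPiNumber π (D.relIndex K)) : K ≤ D := by
  have hcard : Nat.card (D.subgroupOf K) = Nat.card D :=
    Nat.card_congr (subgroupOfEquivOfLe hDK).toEquiv
  obtain ⟨P, hPn, hDP⟩ := exists_normal_isComplement'_of_le_center (N := D.subgroupOf K)
    (fun d hd => mem_center_iff.mpr fun k => Subtype.ext (hKD k.2 d hd).symm)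
    (hcard ▸ (hrel.coprime hD).symm)
  have hP : IsPiNumber π (Nat.card P) := hDP.symm.index_eq_card ▸ hrel
  have hPbot : P = ⊥ := le_bot_iff.mp <| piCore_eq_bot_of_normal K h ▸ le_piCore hPn hP
  rw [← relIndex_eq_one, relIndex, hDP.symm.index_eq_card, hPbot, card_bot]

theorem exists_normal_isPiNumber_relIndex {σ : Set ℕ} {D C : Subgroup G} [D.Normal] [C.Normal]
    (hDC : D ≤ C) (hσ : piCore σ (C.map (QuotientGroup.mk' D)) ≠ ⊥) :
    ∃ K : Subgroup G, K.Normal ∧ D < K ∧ K ≤ C ∧ IsPiNumber σ (D.relIndex K) := by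
  set f := QuotientGroup.mk' D
  have hf : Function.Surjective f := QuotientGroup.mk'_surjective D
  have : (C.map f).Normal := Normal.map inferInstance f hf
  -- `O_σ(C/D)` is characteristic in `C/D ⊴ G/D`, so `M` is normal in `G/D`.
  set M := (piCore σ (C.map f)).map (C.map f).subtype
  have hMK : (M.comap f).map f = M := map_comap_eq_self_of_surjective hf M
  have hker : f.ker = D := QuotientGroup.ker_mk' D
  refine ⟨M.comap f, Normal.comap inferInstance f, lt_of_le_of_ne (hker.ge.trans (f.ker_le_comap M))
    ?_, ?_, ?_⟩
  · intro hDM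
    apply hσ
    rw [← map_eq_bot_iff_of_injective _ (C.map f).subtype_injective]
    change M = ⊥
    rw [← hMK, ← hDM]
    exact (Subgroup.map_eq_bot_iff _).mpr hker.ge
  · calc M.comap f ≤ (C.map f).comap f := comap_mono (map_subtype_le _)
      _ = C := by rw [comap_map_eq, hker, sup_eq_left.mpr hDC]
  · have hrel := relIndex_ker (K := M.comap f) f
    rw [hker, hMK, card_map_of_injective (C.map f).subtype_injective] at hrel
    exact hrel ▸ isPiSubgroup_piCore

end HallHigman

theorem hall_higman_general (π : Set ℕ)
    (G : Type*) [Group G] [Finite G] (hsep : IsPiSeparable π G)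
    (h : piCore π G = ⊥) :
    Subgroup.centralizer (piCore πᶜ G : Set G) ≤ piCore πᶜ G ∧
      (piCore πᶜ G ≤ Subgroup.center G → piCore πᶜ G = ⊤) := by
  set F := piCore πᶜ G
  set C := centralizer (F : Set G)
  have hD : IsPiSubgroup πᶜ (C ⊓ F) := isPiSubgroup_piCore.of_le inf_le_right
  have hCF : C ≤ F := by
    by_contra hCF
    have : Nontrivial (C.map (QuotientGroup.mk' (C ⊓ F))) := by
      rw [nontrivial_iff_ne_bot, Ne, Subgroup.map_eq_bot_iff, QuotientGroup.ker_mk']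
      exact (inf_lt_left.mpr hCF).not_ge
    set f := (QuotientGroup.mk' (C ⊓ F)).subgroupMap C
    rcases ((hsep.subgroup C).of_surjective f (MonoidHom.subgroupMap_surjective _ C)).piCore_ne_bot
      with hπ | hπ'
    · obtain ⟨K, hK, hDK, hKC, hrel⟩ := exists_normal_isPiNumber_relIndex inf_le_left hπ
      exact hDK.not_ge <| le_of_le_centralizer_of_isPiNumber_relIndex h hDK.le
        (hKC.trans (centralizer_le inf_le_right)) hD hrel
    · obtain ⟨K, hK, hDK, hKC, hrel⟩ := exists_normal_isPiNumber_relIndex inf_le_left hπ'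
      exact hDK.not_ge (le_inf hKC (le_piCore hK (hD.of_relIndex hDK.le hrel)))
  exact ⟨hCF, fun hZ => top_le_iff.mp ((centralizer_eq_top_iff_subset.mpr hZ).ge.trans hCF)⟩

/-- Hall–Higman 1.2.3 lemma: if G is π-separable with O_π(G) = 1, then
C_G(O_{π'}(G)) ≤ O_{π'}(G); in particular if O_{π'}(G) is central then
G = O_{π'}(G). -/
theorem hall_higman (π : Set ℕ) (hπ : ∀ p ∈ π, p.Prime)
    (G : Type*) [Group G] [Finite G] (hsep : IsPiSeparable π G)
    (h : piCore π G = ⊥) :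
    Subgroup.centralizer (piCore πᶜ G : Set G) ≤ piCore πᶜ G ∧
      (piCore πᶜ G ≤ Subgroup.center G → piCore πᶜ G = ⊤) :=
  hall_higman_general π G hsep h
end
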